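/- The N×N matrix Ã obtained by stacking A (rows indexed i = 2,…,N) on top of the row vector A_p is a two-sided inverse of D̃_{2:N+1}, the N×N matrix formed by columns 2 through N+1 of D̃; that is, Ã · D̃_{2:N+1} = I_N and D̃_{2:N+1} · Ã = I_N. -/

import Mathlib

/-! Column `j` of `D̃_{2:N+1}` samples at the nodes the derivative of `P_j`, where
`P_j = L_{j+1}` for `j < N - 1` and `P_{N-1} = L_p`. Since `deg P_j' < N`, `P_j'` coincides with
its Lagrange interpolant, so the row of `A` at `τ_{i+1}` maps it to
`∫_{-1}^{τ_{i+1}} P_j' = P_j(τ_{i+1}) - P_j(-1) = δ_{ij}`. The row `A_p` is `1/N` times the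
weights of the formula expressing the coefficient of `t^{N-1}` of a polynomial of degree `< N`
through its values at the nodes, so it maps `P_j'` to the coefficient of `t^N` in `P_j`, which is
`1` for the monic `L_p` and `0` for `L_{j+1}`. A one-sided inverse of a square matrix is
two-sided. -/

open Polynomial

/-- `lagL τ i` is the `i`-th Lagrange basis polynomial (of degree `N - 1`)
for the nodes `τ 0, …, τ (N-1)`, satisfying `(lagL τ i).eval (τ j) = δᵢⱼ`. -/
noncomputable def lagL {N : ℕ} (τ : Fin N → ℝ) (i : Fin N) : ℝ[X] :=
  Lagrange.basis Finset.univ τ i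

/-- `lagLp τ` is the polynomial `L_p(x) = ∏ᵢ (x - τᵢ)`. -/
noncomputable def lagLp {N : ℕ} (τ : Fin N → ℝ) : ℝ[X] :=
  ∏ i, (X - C (τ i))

/-- The differentiation matrix `D`, with `D i j = L_j'(τ i)`. -/
noncomputable def matD {N : ℕ} (τ : Fin N → ℝ) : Matrix (Fin N) (Fin N) ℝ :=
  fun i j => (derivative (lagL τ j)).eval (τ i)

/-- The vector `D_p`, with `(D_p) i = L_p'(τ i)`. -/
noncomputable def vecDp {N : ℕ} (τ : Fin N → ℝ) : Fin N → ℝ :=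
  fun i => (derivative (lagLp τ)).eval (τ i)

/-- Columns `2, …, N+1` (in 1-based numbering) of the augmented differentiation
matrix `D̃ = [D  D_p]`: column `j` (0-based, `j < N - 1`) is column `j + 1` of `D`,
and the last column is `D_p`. -/
noncomputable def matDtil2 {N : ℕ} (τ : Fin N → ℝ) : Matrix (Fin N) (Fin N) ℝ :=
  fun i j => if h : (j : ℕ) + 1 < N then matD τ i ⟨(j : ℕ) + 1, h⟩ else vecDp τ i

/-- The quadrature rule with nodes `τ` and weights `w` integrates exactly all
polynomials of degree at most `2 * N - 3` over `[-1, 1]`. -/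
def IsQuadrature {N : ℕ} (τ : Fin N → ℝ) (w : Fin N → ℝ) : Prop :=
  ∀ p : ℝ[X], p.natDegree ≤ 2 * N - 3 →
    ∑ i, w i * p.eval (τ i) = ∫ t in (-1 : ℝ)..1, p.eval t

/-- The integration matrix `A` with rows indexed (0-based) by `i : Fin (N-1)`
corresponding to the node `τ (i+1)`: `A i j = ∫_{-1}^{τ (i+1)} L_j(t) dt`. -/
noncomputable def matA {N : ℕ} (τ : Fin N → ℝ) : Matrix (Fin (N - 1)) (Fin N) ℝ :=
  fun i j => ∫ t in (-1 : ℝ)..(τ ⟨(i : ℕ) + 1, by have := i.isLt; omega⟩), (lagL τ j).eval t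

/-- The row vector `A_p`, with `(A_p) j = (1/N) ∏_{k ≠ j} 1 / (τ j - τ k)`. -/
noncomputable def rowAp {N : ℕ} (τ : Fin N → ℝ) : Fin N → ℝ :=
  fun j => (1 / (N : ℝ)) * ∏ k ∈ Finset.univ.erase j, (τ j - τ k)⁻¹

/-- The matrix `Ã` obtained by stacking `A` on top of the row vector `A_p`. -/
noncomputable def matAtil {N : ℕ} (τ : Fin N → ℝ) : Matrix (Fin N) (Fin N) ℝ :=
  fun i j => if h : (i : ℕ) + 1 < N then matA τ ⟨(i : ℕ), by omega⟩ j else rowAp τ j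

/-- The adjoint integration matrix `A† = W⁻¹ Aᵀ W_{2:N}`, with columns indexed
(0-based) by `j : Fin (N-1)` corresponding to the node `τ (j+1)`. -/
noncomputable def matAdag {N : ℕ} (τ : Fin N → ℝ) (w : Fin N → ℝ) :
    Matrix (Fin N) (Fin (N - 1)) ℝ :=
  fun i j => (w i)⁻¹ * matA τ j i * w ⟨(j : ℕ) + 1, by have := j.isLt; omega⟩

/-- `polyM τ k` is the Lagrange basis polynomial (of degree `N - 3`) for the
interior nodes `τ 1, …, τ (N-2)`, satisfying `(polyM τ k).eval (τ m) = δₖₘ`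
for interior indices `m`. -/
noncomputable def polyM {N : ℕ} (τ : Fin N → ℝ) (k : Fin N) : ℝ[X] :=
  Lagrange.basis (Finset.univ.filter fun m : Fin N => 0 < (m : ℕ) ∧ (m : ℕ) < N - 1) τ k

/-- The polynomial `λ(x) = ∑ᵢ (A† r)ᵢ Lᵢ(x)`. -/
noncomputable def lamP {N : ℕ} (τ : Fin N → ℝ) (w : Fin N → ℝ) (r : Fin (N - 1) → ℝ) : ℝ[X] :=
  ∑ i, C ((matAdag τ w).mulVec r i) * lagL τ i

theorem Polynomial.integral_eval_derivative (p : ℝ[X]) (a b : ℝ) :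
    ∫ t in a..b, p.derivative.eval t = p.eval b - p.eval a :=
  intervalIntegral.integral_eq_sub_of_hasDerivAt (fun x _ => p.hasDerivAt x)
    (p.derivative.continuous.intervalIntegrable a b)

theorem Lagrange.sum_integral_basis_mul_eval {ι : Type*} [DecidableEq ι] {s : Finset ι}
    {v : ι → ℝ} (hvs : Set.InjOn v s) {p : ℝ[X]} (hp : p.degree < s.card) (a b : ℝ) :
    ∑ i ∈ s, (∫ t in a..b, (Lagrange.basis s v i).eval t) * p.eval (v i) =
      ∫ t in a..b, p.eval t := by
  conv_rhs => rw [eq_interpolate hvs hp, interpolate_apply]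
  simp_rw [eval_finsetSum, eval_C_mul]
  rw [intervalIntegral.integral_finsetSum fun i _ =>
    ((Lagrange.basis s v i).continuous.intervalIntegrable a b).const_mul _]
  simp_rw [intervalIntegral.integral_const_mul, mul_comm]

section Pseudospectral

variable {N : ℕ} {τ : Fin N → ℝ}

noncomputable def matDtil2Primitive (τ : Fin N → ℝ) (j : Fin N) : ℝ[X] :=
  if h : (j : ℕ) + 1 < N then lagL τ ⟨(j : ℕ) + 1, h⟩ else lagLp τ

theorem matDtil2_apply (k j : Fin N) :
    matDtil2 τ k j = (matDtil2Primitive τ j).derivative.eval (τ k) := by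
  unfold matDtil2 matDtil2Primitive
  split_ifs <;> rfl

theorem lagLp_eq_nodal : lagLp τ = Lagrange.nodal Finset.univ τ := rfl

theorem natDegree_matDtil2Primitive_le (hτ : Function.Injective τ) (j : Fin N) :
    (matDtil2Primitive τ j).natDegree ≤ N := by
  unfold matDtil2Primitive
  split_ifs
  · rw [lagL, Lagrange.natDegree_basis hτ.injOn (Finset.mem_univ _), Finset.card_fin]
    omega
  · rw [lagLp_eq_nodal, Lagrange.natDegree_nodal, Finset.card_fin]

theorem degree_derivative_matDtil2Primitive_lt (hτ : Function.Injective τ) (hN : 0 < N)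
    (j : Fin N) : (matDtil2Primitive τ j).derivative.degree < N := by
  have := (natDegree_derivative_le _).trans
    (Nat.sub_le_sub_right (natDegree_matDtil2Primitive_le hτ j) 1)
  exact degree_le_natDegree.trans_lt (by exact_mod_cast this.trans_lt (by omega))

theorem eval_matDtil2Primitive_zero (hN : 0 < N) (j : Fin N) :
    (matDtil2Primitive τ j).eval (τ ⟨0, hN⟩) = 0 := by
  unfold matDtil2Primitive
  split_ifs
  · exact Lagrange.eval_basis_of_ne (by simp [Fin.ext_iff]) (Finset.mem_univ _)
  · exact Lagrange.eval_nodal_at_node (Finset.mem_univ _)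

theorem eval_matDtil2Primitive_succ (hτ : Function.Injective τ) {i : Fin N}
    (hi : (i : ℕ) + 1 < N) (j : Fin N) :
    (matDtil2Primitive τ j).eval (τ ⟨(i : ℕ) + 1, hi⟩) = if i = j then 1 else 0 := by
  unfold matDtil2Primitive
  split_ifs with hj hij hij
  · subst hij
    exact Lagrange.eval_basis_self hτ.injOn (Finset.mem_univ _)
  · exact Lagrange.eval_basis_of_ne (by simp [Fin.ext_iff]; omega) (Finset.mem_univ _)
  · exact absurd (hij ▸ hi) hj
  · exact Lagrange.eval_nodal_at_node (Finset.mem_univ _)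

theorem coeff_matDtil2Primitive (hτ : Function.Injective τ) (j : Fin N) :
    (matDtil2Primitive τ j).coeff N = if (j : ℕ) + 1 < N then 0 else 1 := by
  unfold matDtil2Primitive
  split_ifs
  · refine coeff_eq_zero_of_natDegree_lt ?_
    rw [lagL, Lagrange.natDegree_basis hτ.injOn (Finset.mem_univ _), Finset.card_fin]
    omega
  · simpa [lagLp_eq_nodal, Lagrange.natDegree_nodal] using
      (Lagrange.nodal_monic (s := Finset.univ) (v := τ)).coeff_natDegree

theorem sum_matAtil_mul_eval_of_lt (hτ : Function.Injective τ) {i : Fin N}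
    (hi : (i : ℕ) + 1 < N) {q : ℝ[X]} (hq : q.degree < N) :
    ∑ k, matAtil τ i k * q.eval (τ k) =
      ∫ t in (-1 : ℝ)..τ ⟨(i : ℕ) + 1, hi⟩, q.eval t := by
  simp only [matAtil, dif_pos hi, matA, lagL]
  exact Lagrange.sum_integral_basis_mul_eval hτ.injOn (by rwa [Finset.card_fin]) _ _

theorem sum_matAtil_mul_eval_of_not_lt (hτ : Function.Injective τ) {i : Fin N}
    (hi : ¬(i : ℕ) + 1 < N) {q : ℝ[X]} (hq : q.degree < N) :
    ∑ k, matAtil τ i k * q.eval (τ k) = q.coeff (N - 1) / N := by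
  have hcoeff := Lagrange.coeff_eq_sum (s := Finset.univ) hτ.injOn (by rwa [Finset.card_fin])
  rw [Finset.card_fin] at hcoeff
  simp only [matAtil, dif_neg hi, rowAp, hcoeff, Finset.sum_div, Finset.prod_inv_distrib]
  refine Finset.sum_congr rfl fun k _ => ?_
  ring

theorem matAtil_mul_matDtil2 (hτ : Function.Injective τ) (hN : 0 < N)
    (h0 : τ ⟨0, hN⟩ = -1) : matAtil τ * matDtil2 τ = 1 := by
  ext i j
  simp only [Matrix.mul_apply, matDtil2_apply, Matrix.one_apply]
  have hq := degree_derivative_matDtil2Primitive_lt hτ hN j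
  by_cases hi : (i : ℕ) + 1 < N
  · rw [sum_matAtil_mul_eval_of_lt hτ hi hq, integral_eval_derivative, ← h0,
      eval_matDtil2Primitive_zero, sub_zero, eval_matDtil2Primitive_succ hτ hi]
  · rw [sum_matAtil_mul_eval_of_not_lt hτ hi hq, coeff_derivative, Nat.sub_add_cancel hN,
      coeff_matDtil2Primitive hτ, Nat.cast_pred hN, sub_add_cancel]
    have hij : i = j ↔ ¬(j : ℕ) + 1 < N := by omega
    rw [mul_div_cancel_right₀ _ (Nat.cast_ne_zero.mpr hN.ne'), if_congr hij rfl rfl, ite_not]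

end Pseudospectral

/-- `Ã` is a two-sided inverse of `D̃_{2:N+1}`. -/
theorem stmt4 (N : ℕ) (hN : 3 ≤ N) (τ : Fin N → ℝ) (hmono : StrictMono τ)
    (h0 : τ ⟨0, by omega⟩ = -1) :
    matAtil τ * matDtil2 τ = 1 ∧ matDtil2 τ * matAtil τ = 1 := by
  have hleft := matAtil_mul_matDtil2 hmono.injective (by omega) h0
  exact ⟨hleft, mul_eq_one_comm.mp hleft⟩
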